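/- arXiv:2003.12400 — 2 statements merged into one kernel-verified Lean document; each statement's English description precedes it below -/
import Mathlib

section
/- (Necessary condition for positive equilibria.) Consider ẋ = S(x)·f satisfying (H1) on a directed graph G = (V, E) with intake set I and excretion set J. Suppose there exists x̄ ∈ (ℝ≥0)^n and a flux vector f with f_e > 0 for every edge e such that S(x̄)·f = 0. Then for every node v ∈ V reachable by a directed path from an intake node, there exists a directed path from v to an excretion node. -/
/-- Necessary condition for positive equilibria (Proposition 1): if the LIFE system
`ẋ = S(x)·f` under (H1) admits an equilibrium `x̄ ≥ 0` for a flux vector with all fluxes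
positive, then every node reachable by a directed path from an intake node has a directed
path to an excretion node. -/
theorem stmt_9 (V E : Type*) [Fintype V] [Fintype E] [DecidableEq V]
    (src dst : E → Option V)
    (F : E → ℝ → ℝ) (hF : ∀ e, StrictMonoOn (F e) (Set.Ici 0) ∧ F e 0 = 0)
    (x : V → ℝ) (hx : ∀ v, 0 ≤ x v) (f : E → ℝ) (hf : ∀ e, 0 < f e)
    (S : V → E → ℝ)
    (hS : ∀ v e, S v e =
      (if src e = some v then -(F e (x v)) else 0) +
      (if dst e = some v then Option.elim (src e) 1 (fun w => F e (x w)) else 0))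
    (heq : ∀ v, (∑ e, S v e * f e) = 0)
    (step : V → V → Prop)
    (hstep : ∀ a b, step a b ↔ ∃ e, src e = some a ∧ dst e = some b) :
    ∀ v : V, (∃ i, (∃ e, src e = none ∧ dst e = some i) ∧ Relation.ReflTransGen step i v) →
      ∃ j, (∃ e, src e = some j ∧ dst e = none) ∧ Relation.ReflTransGen step v j := by
  classical
  rintro v ⟨i, ⟨e0, he0s, he0d⟩, hiv⟩
  by_contra hcon
  -- basic facts about F
  have hF0 : ∀ e (t : ℝ), 0 ≤ t → 0 ≤ F e t := by
    intro e t ht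
    rcases ht.lt_or_eq with h | h
    · have := (hF e).1 Set.self_mem_Ici (Set.mem_Ici.2 ht) h
      linarith [(hF e).2]
    · rw [← h, (hF e).2]
  have hFpos : ∀ e (t : ℝ), 0 < t → 0 < F e t := by
    intro e t ht
    have := (hF e).1 Set.self_mem_Ici (Set.mem_Ici.2 ht.le) ht
    linarith [(hF e).2]
  -- key lemma: a node receiving a positive inflow has positive concentration
  have hkey : ∀ b, (∃ e, dst e = some b ∧
      (src e = none ∨ ∃ a, src e = some a ∧ 0 < x a)) → 0 < x b := by
    rintro b ⟨e1, hd1, hsc⟩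
    rcases (hx b).lt_or_eq with h | h
    · exact h
    exfalso
    have hb : x b = 0 := h.symm
    have hfirst : ∀ e, (if src e = some b then -(F e (x b)) else 0) = 0 := by
      intro e
      split
      · rw [hb, (hF e).2, neg_zero]
      · rfl
    have hnn : ∀ e ∈ Finset.univ, 0 ≤ S b e * f e := by
      intro e _
      apply mul_nonneg _ (hf e).le
      rw [hS, hfirst, zero_add]
      split
      · cases hsrc : src e with
        | none => norm_num
        | some w => simpa using hF0 e (x w) (hx w)
      · exact le_refl 0
    have hpos1 : 0 < S b e1 * f e1 := by
      apply mul_pos _ (hf e1)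
      rw [hS, hfirst, zero_add, if_pos hd1]
      rcases hsc with h1 | ⟨a, ha, hxa⟩
      · rw [h1]; norm_num
      · rw [ha]; simpa using hFpos e1 (x a) hxa
    have : 0 < ∑ e, S b e * f e :=
      Finset.sum_pos' hnn ⟨e1, Finset.mem_univ _, hpos1⟩
    rw [heq b] at this
    exact lt_irrefl 0 this
  -- every node reachable from the intake node i has positive concentration
  have hpos : ∀ w, Relation.ReflTransGen step i w → 0 < x w := by
    intro w h
    induction h with
    | refl => exact hkey i ⟨e0, he0d, Or.inl he0s⟩
    | @tail b c h1 h2 ih =>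
      obtain ⟨e, hsa, hdb⟩ := (hstep b c).1 h2
      exact hkey c ⟨e, hdb, Or.inr ⟨b, hsa, ih⟩⟩
  -- the trapping set A : nodes reachable from i that cannot reach an excretion node
  set P : V → Prop := fun w => Relation.ReflTransGen step i w ∧
      ¬ ∃ j, (∃ e, src e = some j ∧ dst e = none) ∧ Relation.ReflTransGen step w j with hP
  set A : Finset V := Finset.univ.filter P with hA
  have hmem : ∀ w, w ∈ A ↔ P w := by
    intro w; simp [hA]
  have hvA : v ∈ A := (hmem v).2 ⟨hiv, hcon⟩
  -- A is closed under edges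
  have hclosed : ∀ a, a ∈ A → ∀ e b, src e = some a → dst e = some b → b ∈ A := by
    intro a ha e b hs hd
    obtain ⟨hra, hna⟩ := (hmem a).1 ha
    have hab : step a b := (hstep a b).2 ⟨e, hs, hd⟩
    refine (hmem b).2 ⟨hra.tail hab, ?_⟩
    rintro ⟨j, hj, hbj⟩
    exact hna ⟨j, hj, (Relation.ReflTransGen.single hab).trans hbj⟩
  -- no excretion edge leaves A
  have hnoex : ∀ a, a ∈ A → ∀ e, src e = some a → dst e ≠ none := by
    intro a ha e hs hd
    obtain ⟨_, hna⟩ := (hmem a).1 ha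
    exact hna ⟨a, ⟨e, hs, hd⟩, Relation.ReflTransGen.refl⟩
  -- total balance over A
  set T : E → ℝ := fun e => ∑ a ∈ A, S a e with hTdef
  have hsum : ∑ e, T e * f e = 0 := by
    calc ∑ e, T e * f e = ∑ e, ∑ a ∈ A, S a e * f e := by
          simp [hTdef, Finset.sum_mul]
      _ = ∑ a ∈ A, ∑ e, S a e * f e := Finset.sum_comm
      _ = 0 := Finset.sum_eq_zero fun a _ => heq a
  -- compute T e
  have hT : ∀ e, T e =
      (src e).elim 0 (fun a => if a ∈ A then -(F e (x a)) else 0) +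
      (dst e).elim 0 (fun b => if b ∈ A then
        (src e).elim 1 (fun w => F e (x w)) else 0) := by
    intro e
    rw [hTdef]
    simp only [hS, Finset.sum_add_distrib]
    congr 1
    · cases hsrc : src e with
      | none => simp
      | some a => simp [Finset.sum_ite_eq]
    · cases hdst : dst e with
      | none => simp
      | some b => simp [Finset.sum_ite_eq]
  -- each term is nonnegative
  have hTnn : ∀ e ∈ Finset.univ, 0 ≤ T e * f e := by
    intro e _
    apply mul_nonneg _ (hf e).le
    rw [hT]
    cases hsrc : src e with
    | none =>
      cases hdst : dst e with
      | none => norm_num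
      | some b =>
        simp only [Option.elim]
        split <;> norm_num
    | some a =>
      cases hdst : dst e with
      | none =>
        by_cases ha : a ∈ A
        · exact absurd hdst (hnoex a ha e hsrc)
        · simp [ha]
      | some b =>
        by_cases ha : a ∈ A
        · have hbA : b ∈ A := hclosed a ha e b hsrc hdst
          simp [ha, hbA]
        · simp only [Option.elim, if_neg ha, zero_add]
          split
          · exact hF0 e (x a) (hx a)
          · exact le_refl 0
  -- there is an edge entering A with positive flow contribution
  have hclaim : ∀ w, Relation.ReflTransGen step i w → w ∈ A →
      ∃ e b, dst e = some b ∧ b ∈ A ∧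
        (src e = none ∨ ∃ u, src e = some u ∧ u ∉ A ∧ 0 < x u) := by
    intro w h
    induction h with
    | refl => intro hi; exact ⟨e0, i, he0d, hi, Or.inl he0s⟩
    | @tail b c h1 h2 ih =>
      intro hc
      by_cases hb : b ∈ A
      · exact ih hb
      · obtain ⟨e, hs, hd⟩ := (hstep b c).1 h2
        exact ⟨e, c, hd, hc, Or.inr ⟨b, hs, hb, hpos b h1⟩⟩
  obtain ⟨e1, b1, hd1, hb1, hsrc1⟩ := hclaim v hiv hvA
  have hTpos : 0 < T e1 * f e1 := by
    apply mul_pos _ (hf e1)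
    rw [hT, hd1]
    rcases hsrc1 with h1 | ⟨u, hu, huA, hxu⟩
    · rw [h1]; simp [hb1]
    · rw [hu]
      simp only [Option.elim, if_neg huA, if_pos hb1, zero_add]
      exact hFpos e1 (x u) hxu
  have : 0 < ∑ e, T e * f e :=
    Finset.sum_pos' hTnn ⟨e1, Finset.mem_univ _, hTpos⟩
  rw [hsum] at this
  exact lt_irrefl 0 this
end

section
/- Consider the LIFE dynamics under (H1). Restricted to the 'bad set' B of nodes reachable from intakes but with no path to excretion, the total mass Σ_{v ∈ B} x_v is nondecreasing along trajectories, and strictly increasing whenever some flux on an edge from outside B into B is positive with positive upstream metabolite level. Consequently no equilibrium with all fluxes positive can exist if B is nonempty. -/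
open scoped Classical

lemma sum_ite_opt {V : Type*} [Fintype V] [DecidableEq V] (p : V → Prop)
    (o : Option V) (g : V → ℝ) :
    ∑ v ∈ Finset.univ.filter p, (if o = some v then g v else 0) =
      o.elim 0 (fun a => if p a then g a else 0) := by
  cases o with
  | none => simp
  | some a =>
      simp only [Option.elim, Option.some.injEq]
      rw [Finset.sum_ite_eq (Finset.univ.filter p) a g]
      simp

open scoped Classical in
/-- LIFE dynamics under (H1): on the bad set `B` of nodes reachable from intakes but with
no path to excretion, the total mass derivative `Σ_{v∈B} ẋ_v` is nonnegative, strictly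
positive whenever some edge entering `B` from outside carries positive flux with positive
upstream metabolite level (or is an intake); consequently, if `B` is nonempty, no
equilibrium with all fluxes positive exists. -/
theorem stmt_15 (V E : Type*) [Fintype V] [Fintype E] [DecidableEq V]
    (src dst : E → Option V)
    (F : E → ℝ → ℝ) (hF : ∀ e, StrictMonoOn (F e) (Set.Ici 0) ∧ F e 0 = 0)
    (S : (V → ℝ) → V → E → ℝ)
    (hS : ∀ (x : V → ℝ) (v : V) (e : E), S x v e =
      (if src e = some v then -(F e (x v)) else 0) +
      (if dst e = some v then Option.elim (src e) 1 (fun w => F e (x w)) else 0))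
    (step : V → V → Prop)
    (hstep : ∀ a b, step a b ↔ ∃ e, src e = some a ∧ dst e = some b)
    (inB : V → Prop)
    (hB : ∀ v, inB v ↔
      ((∃ i, (∃ e, src e = none ∧ dst e = some i) ∧ Relation.ReflTransGen step i v) ∧
        ¬ ∃ j, (∃ e, src e = some j ∧ dst e = none) ∧ Relation.ReflTransGen step v j)) :
    (∀ (x : V → ℝ) (f : E → ℝ), (∀ v, 0 ≤ x v) → (∀ e, 0 ≤ f e) →
      0 ≤ ∑ v ∈ Finset.univ.filter inB, ∑ e, S x v e * f e) ∧
    (∀ (x : V → ℝ) (f : E → ℝ), (∀ v, 0 ≤ x v) → (∀ e, 0 ≤ f e) →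
      (∃ e v, dst e = some v ∧ inB v ∧ 0 < f e ∧
        (src e = none ∨ ∃ w, src e = some w ∧ ¬ inB w ∧ 0 < x w)) →
      0 < ∑ v ∈ Finset.univ.filter inB, ∑ e, S x v e * f e) ∧
    ((∃ v, inB v) →
      ¬ ∃ (x : V → ℝ) (f : E → ℝ), (∀ v, 0 ≤ x v) ∧ (∀ e, 0 < f e) ∧
        ∀ v, (∑ e, S x v e * f e) = 0) := by
  have hFnn : ∀ e t, 0 ≤ t → 0 ≤ F e t := by
    intro e t ht
    have := (hF e).1.monotoneOn Set.self_mem_Ici (Set.mem_Ici.mpr ht) ht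
    rwa [(hF e).2] at this
  have hFpos : ∀ e t, 0 < t → 0 < F e t := by
    intro e t ht
    have := (hF e).1 Set.self_mem_Ici (Set.mem_Ici.mpr ht.le) ht
    rwa [(hF e).2] at this
  have hclosed : ∀ e a, inB a → src e = some a → ∃ b, dst e = some b ∧ inB b := by
    intro e a ha hsrc
    obtain ⟨⟨i, hi, hiv⟩, hnoj⟩ := (hB a).1 ha
    cases hdst : dst e with
    | none => exact absurd ⟨a, ⟨e, hsrc, hdst⟩, Relation.ReflTransGen.refl⟩ hnoj
    | some b =>
        refine ⟨b, rfl, (hB b).2 ⟨⟨i, hi, hiv.tail ((hstep a b).2 ⟨e, hsrc, hdst⟩)⟩, ?_⟩⟩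
        rintro ⟨j, hj, hbj⟩
        exact hnoj ⟨j, hj, Relation.ReflTransGen.head ((hstep a b).2 ⟨e, hsrc, hdst⟩) hbj⟩
  have hsum : ∀ (x : V → ℝ) (e : E), ∑ v ∈ Finset.univ.filter inB, S x v e =
      ((src e).elim 0 fun a => if inB a then -(F e (x a)) else 0) +
      ((dst e).elim 0 fun b => if inB b then (src e).elim 1 (fun w => F e (x w)) else 0) := by
    intro x e
    simp only [hS]
    rw [Finset.sum_add_distrib, sum_ite_opt, sum_ite_opt]
  have hc_nonneg : ∀ (x : V → ℝ), (∀ v, 0 ≤ x v) → ∀ e,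
      0 ≤ ∑ v ∈ Finset.univ.filter inB, S x v e := by
    intro x hx e
    rw [hsum x e]
    cases hsrc : src e with
    | none =>
        cases hdst : dst e with
        | none => simp
        | some b =>
            simp only [Option.elim]
            split <;> norm_num
    | some a =>
        by_cases ha : inB a
        · obtain ⟨b, hdst, hb⟩ := hclosed e a ha hsrc
          rw [hdst]
          simp only [Option.elim, if_pos ha, if_pos hb]
          linarith
        · cases hdst : dst e with
          | none => simp [Option.elim, ha]
          | some b =>
              simp only [Option.elim, if_neg ha, zero_add]
              split
              · exact hFnn e (x a) (hx a)
              · exact le_refl 0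
  have part1 : ∀ (x : V → ℝ) (f : E → ℝ), (∀ v, 0 ≤ x v) → (∀ e, 0 ≤ f e) →
      0 ≤ ∑ v ∈ Finset.univ.filter inB, ∑ e, S x v e * f e := by
    intro x f hx hf
    rw [Finset.sum_comm]
    refine Finset.sum_nonneg fun e _ => ?_
    rw [← Finset.sum_mul]
    exact mul_nonneg (hc_nonneg x hx e) (hf e)
  have part2 : ∀ (x : V → ℝ) (f : E → ℝ), (∀ v, 0 ≤ x v) → (∀ e, 0 ≤ f e) →
      (∃ e v, dst e = some v ∧ inB v ∧ 0 < f e ∧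
        (src e = none ∨ ∃ w, src e = some w ∧ ¬ inB w ∧ 0 < x w)) →
      0 < ∑ v ∈ Finset.univ.filter inB, ∑ e, S x v e * f e := by
    rintro x f hx hf ⟨e, v, hdst, hv, hfe, hcase⟩
    rw [Finset.sum_comm]
    refine Finset.sum_pos' (fun e' _ => ?_) ⟨e, Finset.mem_univ e, ?_⟩
    · rw [← Finset.sum_mul]
      exact mul_nonneg (hc_nonneg x hx e') (hf e')
    · rw [← Finset.sum_mul]
      refine mul_pos ?_ hfe
      rw [hsum x e, hdst]
      rcases hcase with hsrc | ⟨w, hsrc, hw, hxw⟩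
      · rw [hsrc]; simp [Option.elim, hv]
      · rw [hsrc]
        simp only [Option.elim, if_neg hw, if_pos hv, zero_add]
        exact hFpos e (x w) hxw
  refine ⟨part1, part2, ?_⟩
  rintro ⟨v0, hv0⟩ ⟨x, f, hx, hf, heq⟩
  have hnodepos : ∀ b, (∃ e, dst e = some b ∧
      (src e = none ∨ ∃ w, src e = some w ∧ 0 < x w)) → 0 < x b := by
    rintro b ⟨e0, hdst0, hcase⟩
    by_contra hb
    have hxb : x b = 0 := le_antisymm (not_lt.mp hb) (hx b)
    have hpos : 0 < ∑ e, S x b e * f e := by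
      refine Finset.sum_pos' (fun e _ => ?_) ⟨e0, Finset.mem_univ _, ?_⟩
      · rw [hS]
        have hout : (if src e = some b then -(F e (x b)) else 0) = 0 := by
          split <;> simp [hxb, (hF e).2]
        rw [hout, zero_add]
        refine mul_nonneg ?_ (hf e).le
        split
        · cases hsrc : src e with
          | none => norm_num
          | some w => exact hFnn e (x w) (hx w)
        · exact le_refl 0
      · rw [hS]
        have hout : (if src e0 = some b then -(F e0 (x b)) else 0) = 0 := by
          split <;> simp [hxb, (hF e0).2]
        rw [hout, zero_add, if_pos hdst0]
        refine mul_pos ?_ (hf e0)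
        rcases hcase with hsrc | ⟨w, hsrc, hxw⟩
        · rw [hsrc]; norm_num
        · rw [hsrc]; exact hFpos e0 (x w) hxw
    linarith [heq b]
  have hsteppos : ∀ a b, step a b → 0 < x a → 0 < x b := by
    intro a b hab ha
    obtain ⟨e, h1, h2⟩ := (hstep a b).1 hab
    exact hnodepos b ⟨e, h2, Or.inr ⟨a, h1, ha⟩⟩
  have hpathpos : ∀ i v, 0 < x i → Relation.ReflTransGen step i v → 0 < x v := by
    intro i v hi h
    induction h with
    | refl => exact hi
    | tail _ h2 ih => exact hsteppos _ _ h2 ih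
  have hfind : ∀ a b, Relation.ReflTransGen step a b → inB b →
      inB a ∨ ∃ w c e, src e = some w ∧ dst e = some c ∧ ¬ inB w ∧ inB c ∧
        Relation.ReflTransGen step a w := by
    intro a b h
    induction h with
    | refl => exact fun hb => Or.inl hb
    | @tail p q h1 h2 ih =>
        intro hq
        by_cases hp : inB p
        · exact ih hp
        · obtain ⟨e, he1, he2⟩ := (hstep p q).1 h2
          exact Or.inr ⟨p, q, e, he1, he2, hp, hq, h1⟩
  obtain ⟨⟨i, hi, hiv⟩, _⟩ := (hB v0).1 hv0
  have hzero : ∑ v ∈ Finset.univ.filter inB, ∑ e, S x v e * f e = 0 :=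
    Finset.sum_eq_zero fun v _ => heq v
  have hxi : 0 < x i := by
    obtain ⟨e0, h1, h2⟩ := hi
    exact hnodepos i ⟨e0, h2, Or.inl h1⟩
  rcases hfind i v0 hiv hv0 with hiB | ⟨w, c, e, he1, he2, hw, hc, hiw⟩
  · obtain ⟨e0, h1, h2⟩ := hi
    have := part2 x f hx (fun e => (hf e).le) ⟨e0, i, h2, hiB, hf e0, Or.inl h1⟩
    linarith
  · have hxw : 0 < x w := hpathpos i w hxi hiw
    have := part2 x f hx (fun e => (hf e).le) ⟨e, c, he2, hc, hf e, Or.inr ⟨w, he1, hw, hxw⟩⟩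
    linarith
end
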